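/- arXiv:2407.04035 — 3 statements merged into one kernel-verified Lean document; each statement's English description precedes it below -/
import Mathlib

section
/- Let m be a partition scheme on the connected graph G|_R (the restriction of G to a connected vertex subset R with |R| ≥ 2), and let {w_e}_{e ∈ E|_R} be any collection of real numbers. Then Σ_{g connected spanning subgraph of G|_R} Π_{e ∈ E_g} w_e = Σ_{τ spanning tree of G|_R} Π_{e ∈ E_τ} w_e · Π_{e ∈ E_{m(τ)} \ E_τ} (1 + w_e). -/
attribute [-instance] Sym2.instPartialOrder


open scoped Classical

namespace BC

variable {V : Type*}

/-- The set of vertices incident to at least one edge of `τ`. -/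
noncomputable def supp [Fintype V] (τ : Finset (Sym2 V)) : Finset V :=
  Finset.univ.filter (fun v => ∃ e ∈ τ, v ∈ e)

/-- The graph on vertex set `R` with edge set `F` is connected. -/
def ConnOn (R : Finset V) (F : Finset (Sym2 V)) : Prop :=
  (SimpleGraph.induce (R : Set V) (SimpleGraph.fromEdgeSet (F : Set (Sym2 V)))).Connected

/-- Edges of `G` with both endpoints in `R` (edge set of the induced subgraph `G|_R`). -/
noncomputable def edgesIn [Fintype V] [DecidableEq V] (G : SimpleGraph V) [DecidableRel G.Adj]
    (R : Finset V) : Finset (Sym2 V) :=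
  G.edgeFinset.filter (fun e => ∀ v ∈ e, v ∈ R)

/-- `g` is (the edge set of) a connected spanning subgraph of `G|_R`. -/
def IsCSS [Fintype V] [DecidableEq V] (G : SimpleGraph V) [DecidableRel G.Adj]
    (R : Finset V) (g : Finset (Sym2 V)) : Prop :=
  g ⊆ edgesIn G R ∧ ConnOn R g

/-- `τ` is (the edge set of) a spanning tree of `G|_R`. -/
def IsSpanningTree [Fintype V] [DecidableEq V] (G : SimpleGraph V) [DecidableRel G.Adj]
    (R : Finset V) (τ : Finset (Sym2 V)) : Prop :=
  IsCSS G R τ ∧ τ.card = R.card - 1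

/-- A forest: an edge set containing no cycle. -/
def IsForest (F : Finset (Sym2 V)) : Prop :=
  (SimpleGraph.fromEdgeSet (F : Set (Sym2 V))).IsAcyclic

/-- `τ` is the edge set of a nontrivial tree component of the forest `F`. -/
def IsTreeComponent [Fintype V] (F τ : Finset (Sym2 V)) : Prop :=
  τ ⊆ F ∧ τ.Nonempty ∧ ConnOn (supp τ) τ ∧ ∀ e ∈ F \ τ, ∀ v ∈ e, v ∉ supp τ

/-- `C` is the edge set of a simple circuit (cycle) of `G`. -/
def IsCircuit (G : SimpleGraph V) (C : Finset (Sym2 V)) : Prop :=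
  ∃ (v : V) (w : G.Walk v v), w.IsCycle ∧ w.edges.toFinset = C

/-- `B` is a broken circuit of `G`: a simple circuit minus its maximal edge. -/
def IsBrokenCircuit [LinearOrder (Sym2 V)] (G : SimpleGraph V) (B : Finset (Sym2 V)) : Prop :=
  ∃ C e, IsCircuit G C ∧ e ∈ C ∧ (∀ f ∈ C, f ≤ e) ∧ B = C.erase e

/-- `m` is a partition scheme in `G`. -/
def IsPartitionScheme [Fintype V] [DecidableEq V] (G : SimpleGraph V) [DecidableRel G.Adj]
    (m : Finset (Sym2 V) → Finset (Sym2 V)) : Prop :=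
  ∀ R : Finset V, 2 ≤ R.card → ConnOn R (edgesIn G R) →
    (∀ τ, IsSpanningTree G R τ → τ ⊆ m τ ∧ IsCSS G R (m τ)) ∧
    (∀ g, IsCSS G R g → ∃! τ, IsSpanningTree G R τ ∧ τ ⊆ g ∧ g ⊆ m τ)

/-- The minimal-tree partition scheme: `μ(τ)` adds to `τ` every edge `{x,y}` of `G|_R`
larger than all the edges on the path in `τ` from `x` to `y`. -/
noncomputable def mu [Fintype V] [DecidableEq V] (G : SimpleGraph V) [DecidableRel G.Adj]
    [LinearOrder (Sym2 V)] (R : Finset V) (τ : Finset (Sym2 V)) : Finset (Sym2 V) :=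
  τ ∪ (edgesIn G R).filter (fun e => e ∉ τ ∧ ∀ x y : V, e = s(x, y) →
    ∀ p : (SimpleGraph.fromEdgeSet (τ : Set (Sym2 V))).Walk x y, p.IsPath → ∀ f ∈ p.edges, f < e)

/-- All unordered pairs of distinct elements of `R`. -/
noncomputable def allPairs [DecidableEq V] (R : Finset V) : Finset (Sym2 V) :=
  ((R ×ˢ R).filter (fun p => p.1 ≠ p.2)).image (fun p => s(p.1, p.2))

/-- `f` takes the same value at the two endpoints of `e`. -/
def eqOn (f : V → ℕ) (e : Sym2 V) : Prop :=
  Sym2.lift ⟨fun x y => f x = f y, fun x y => propext ⟨Eq.symm, Eq.symm⟩⟩ e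

/-- The Penrose identity for a partition scheme on the connected graph `G|_R`. -/
theorem penrose_identity [Fintype V] [DecidableEq V] (G : SimpleGraph V) [DecidableRel G.Adj]
    (R : Finset V) (hR2 : 2 ≤ R.card) (hRconn : ConnOn R (edgesIn G R))
    (m : Finset (Sym2 V) → Finset (Sym2 V))
    (hm1 : ∀ τ, IsSpanningTree G R τ → τ ⊆ m τ ∧ IsCSS G R (m τ))
    (hm2 : ∀ g, IsCSS G R g → ∃! τ, IsSpanningTree G R τ ∧ τ ⊆ g ∧ g ⊆ m τ)
    (w : Sym2 V → ℝ) :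
    ∑ g ∈ (edgesIn G R).powerset.filter (IsCSS G R), ∏ e ∈ g, w e =
      ∑ τ ∈ (edgesIn G R).powerset.filter (IsSpanningTree G R),
        (∏ e ∈ τ, w e) * ∏ e ∈ m τ \ τ, (1 + w e) := by
  classical
  set S := (edgesIn G R).powerset.filter (IsCSS G R) with hS
  set T := (edgesIn G R).powerset.filter (IsSpanningTree G R) with hT
  -- connectivity is monotone
  have connMono : ∀ (τ g : Finset (Sym2 V)), τ ⊆ g → ConnOn R τ → ConnOn R g := by
    intro τ g hsub hconn
    refine hconn.mono ?_
    intro a b hab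
    exact SimpleGraph.fromEdgeSet_mono (by exact_mod_cast hsub) hab
  -- Step 1: rewrite LHS with the unique tree
  have step1 : ∀ g ∈ S, (∏ e ∈ g, w e) =
      ∑ τ ∈ T.filter (fun τ => τ ⊆ g ∧ g ⊆ m τ), ∏ e ∈ g, w e := by
    intro g hg
    rw [Finset.mem_filter, Finset.mem_powerset] at hg
    obtain ⟨τ₀, ⟨hτ₀st, hτ₀g, hgτ₀⟩, huniq⟩ := hm2 g hg.2
    have : T.filter (fun τ => τ ⊆ g ∧ g ⊆ m τ) = {τ₀} := by
      apply Finset.eq_singleton_iff_unique_mem.2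
      constructor
      · rw [Finset.mem_filter, Finset.mem_filter, Finset.mem_powerset]
        exact ⟨⟨hτ₀g.trans hg.1, hτ₀st⟩, hτ₀g, hgτ₀⟩
      · intro τ hτ
        rw [Finset.mem_filter, Finset.mem_filter] at hτ
        exact huniq τ ⟨hτ.1.2, hτ.2⟩
    rw [this, Finset.sum_singleton]
  rw [Finset.sum_congr rfl step1]
  -- Step 2: swap the sums
  have swap : ∑ g ∈ S, ∑ τ ∈ T.filter (fun τ => τ ⊆ g ∧ g ⊆ m τ), ∏ e ∈ g, w e
      = ∑ τ ∈ T, ∑ g ∈ S.filter (fun g => τ ⊆ g ∧ g ⊆ m τ), ∏ e ∈ g, w e := by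
    simp only [Finset.sum_filter]
    exact Finset.sum_comm
  rw [swap]
  -- Step 3: fixed τ
  apply Finset.sum_congr rfl
  intro τ hτ
  rw [Finset.mem_filter, Finset.mem_powerset] at hτ
  obtain ⟨hτE, hτst⟩ := hτ
  obtain ⟨hτm, hmcss⟩ := hm1 τ hτst
  have hτconn : ConnOn R τ := hτst.1.2
  have hmE : m τ ⊆ edgesIn G R := hmcss.1
  -- expand the product of (1 + w e)
  have expand : (∏ e ∈ m τ \ τ, (1 + w e)) =
      ∑ s ∈ (m τ \ τ).powerset, ∏ e ∈ s, w e := by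
    have : ∀ e ∈ m τ \ τ, (1 + w e) = w e + 1 := fun e _ => add_comm 1 (w e)
    rw [Finset.prod_congr rfl this, Finset.prod_add]
    simp
  rw [expand, Finset.mul_sum]
  refine (Finset.sum_nbij' (fun s => τ ∪ s) (fun g => g \ τ) ?_ ?_ ?_ ?_ ?_).symm
  · intro s hs
    rw [Finset.mem_powerset] at hs
    have hsm : s ⊆ m τ := hs.trans Finset.sdiff_subset
    have hcup : τ ∪ s ⊆ m τ := Finset.union_subset hτm hsm
    rw [Finset.mem_filter, Finset.mem_filter, Finset.mem_powerset]
    refine ⟨⟨hcup.trans hmE, hcup.trans hmE, ?_⟩, Finset.subset_union_left, hcup⟩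
    exact connMono τ _ Finset.subset_union_left hτconn
  · intro g hg
    rw [Finset.mem_filter] at hg
    rw [Finset.mem_powerset]
    exact Finset.sdiff_subset_sdiff hg.2.2 Finset.Subset.rfl
  · intro s hs
    rw [Finset.mem_powerset] at hs
    have hdisj : Disjoint τ s := by
      refine Finset.disjoint_left.2 fun e he hes => ?_
      exact (Finset.mem_sdiff.1 (hs hes)).2 he
    exact Finset.union_sdiff_cancel_left hdisj
  · intro g hg
    rw [Finset.mem_filter] at hg
    exact Finset.union_sdiff_of_subset hg.2.1
  · intro s hs
    rw [Finset.mem_powerset] at hs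
    have hdisj : Disjoint τ s := by
      refine Finset.disjoint_left.2 fun e he hes => ?_
      exact (Finset.mem_sdiff.1 (hs hes)).2 he
    rw [Finset.prod_union hdisj]

end BC
end

section
/- Let m be a partition scheme on the connected graph G|_R with |R| ≥ 2. Then Σ_{g connected spanning subgraph of G|_R} (-1)^{|E_g|} = (-1)^{|R|-1} · |{τ spanning tree of G|_R : m(τ) = τ}|. -/
open scoped Classical

namespace BC

variable {V : Type*}

lemma connOn_mono {R : Finset V} {F F' : Finset (Sym2 V)} (h : F ⊆ F') (hc : ConnOn R F) :
    ConnOn R F' := by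
  refine hc.mono ?_
  intro a b hab
  exact ⟨h hab.1, hab.2⟩

/-- The alternating sum over connected spanning subgraphs of `G|_R` counts the
`m`-fixed spanning trees, up to sign. -/
theorem alternating_sum_eq_fixed_trees [Fintype V] [DecidableEq V] (G : SimpleGraph V)
    [DecidableRel G.Adj] (R : Finset V) (hR2 : 2 ≤ R.card) (hRconn : ConnOn R (edgesIn G R))
    (m : Finset (Sym2 V) → Finset (Sym2 V))
    (hm1 : ∀ τ, IsSpanningTree G R τ → τ ⊆ m τ ∧ IsCSS G R (m τ))
    (hm2 : ∀ g, IsCSS G R g → ∃! τ, IsSpanningTree G R τ ∧ τ ⊆ g ∧ g ⊆ m τ) :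
    ∑ g ∈ (edgesIn G R).powerset.filter (IsCSS G R), (-1 : ℤ) ^ g.card =
      (-1 : ℤ) ^ (R.card - 1) *
        ((edgesIn G R).powerset.filter (fun τ => IsSpanningTree G R τ ∧ m τ = τ)).card := by
  classical
  set S := (edgesIn G R).powerset.filter (IsCSS G R) with hS
  set T := (edgesIn G R).powerset.filter (IsSpanningTree G R) with hT
  let t : Finset (Sym2 V) → Finset (Sym2 V) := fun g =>
    if h : IsCSS G R g then (hm2 g h).choose else ∅
  have ht_spec : ∀ g (h : IsCSS G R g),
      IsSpanningTree G R (t g) ∧ t g ⊆ g ∧ g ⊆ m (t g) := fun g h => by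
    simp only [t, dif_pos h]; exact (hm2 g h).choose_spec.1
  have ht_unique : ∀ g (h : IsCSS G R g) τ, (IsSpanningTree G R τ ∧ τ ⊆ g ∧ g ⊆ m τ) →
      τ = t g := fun g h τ hτ => by
    simp only [t, dif_pos h]; exact (hm2 g h).choose_spec.2 τ hτ
  have hmaps : ∀ g ∈ S, t g ∈ T := by
    intro g hg
    rw [hS, Finset.mem_filter, Finset.mem_powerset] at hg
    have hsp := (ht_spec g hg.2).1
    rw [hT, Finset.mem_filter, Finset.mem_powerset]
    exact ⟨hsp.1.1, hsp⟩
  rw [← Finset.sum_fiberwise_of_maps_to hmaps]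
  have fiber_eq : ∀ τ ∈ T, S.filter (fun g => t g = τ) =
      ((m τ \ τ).powerset).image (fun s => τ ∪ s) := by
    intro τ hτT
    rw [hT, Finset.mem_filter, Finset.mem_powerset] at hτT
    obtain ⟨hτsub, hτst⟩ := hτT
    ext g
    simp only [Finset.mem_filter, Finset.mem_image, Finset.mem_powerset, hS,
      Finset.mem_powerset]
    constructor
    · rintro ⟨⟨hge, hgcss⟩, htg⟩
      obtain ⟨_, hτg, hgm⟩ := ht_spec g hgcss
      rw [htg] at hτg hgm
      refine ⟨g \ τ, ?_, ?_⟩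
      · exact Finset.sdiff_subset_sdiff hgm (le_refl τ)
      · rw [Finset.union_sdiff_of_subset hτg]
    · rintro ⟨s, hs, rfl⟩
      have hsm : s ⊆ m τ := hs.trans Finset.sdiff_subset
      have hτm := (hm1 τ hτst).1
      have hmcss := (hm1 τ hτst).2
      have hgm : τ ∪ s ⊆ m τ := Finset.union_subset hτm hsm
      have hgcss : IsCSS G R (τ ∪ s) :=
        ⟨hgm.trans hmcss.1, connOn_mono Finset.subset_union_left hτst.1.2⟩
      refine ⟨⟨hgcss.1, hgcss⟩, ?_⟩
      exact (ht_unique (τ ∪ s) hgcss τ ⟨hτst, Finset.subset_union_left, hgm⟩).symm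
  have inner : ∀ τ ∈ T, ∑ g ∈ S.filter (fun g => t g = τ), (-1 : ℤ) ^ g.card
      = (-1 : ℤ) ^ (R.card - 1) * (if m τ = τ then 1 else 0) := by
        intro τ hτT
        rw [fiber_eq τ hτT]
        have hτT' := hτT
        rw [hT, Finset.mem_filter, Finset.mem_powerset] at hτT'
        obtain ⟨hτsub, hτst⟩ := hτT'
        have hdisj : ∀ s ⊆ m τ \ τ, Disjoint τ s := fun s hs =>
          (Finset.disjoint_sdiff.mono_right hs)
        rw [Finset.sum_image (by
          intro s₁ h₁ s₂ h₂ heq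
          rw [Finset.mem_coe, Finset.mem_powerset] at h₁ h₂
          have e₁ : s₁ = (τ ∪ s₁) \ τ := by
            rw [Finset.union_sdiff_left, Finset.sdiff_eq_self_of_disjoint
              ((hdisj s₁ h₁).symm)]
          have e₂ : s₂ = (τ ∪ s₂) \ τ := by
            rw [Finset.union_sdiff_left, Finset.sdiff_eq_self_of_disjoint
              ((hdisj s₂ h₂).symm)]
          rw [e₁, e₂]; exact congrArg (· \ τ) heq)]
        have : ∀ s ∈ (m τ \ τ).powerset, (-1 : ℤ) ^ (τ ∪ s).card =
            (-1 : ℤ) ^ (R.card - 1) * (-1 : ℤ) ^ s.card := by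
          intro s hs
          rw [Finset.mem_powerset] at hs
          rw [Finset.card_union_of_disjoint (hdisj s hs), hτst.2, pow_add]
        rw [Finset.sum_congr rfl this, ← Finset.mul_sum,
          Finset.sum_powerset_neg_one_pow_card]
        congr 1
        by_cases h : m τ = τ
        · simp [h]
        · have : ¬ (m τ \ τ = ∅) := by
            intro he
            exact h (Finset.Subset.antisymm
              (Finset.sdiff_eq_empty_iff_subset.mp he) (hm1 τ hτst).1)
          simp [h, this]
  rw [Finset.sum_congr rfl inner, ← Finset.mul_sum]
  congr 1
  rw [Finset.sum_boole, hT, Finset.filter_filter]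


end BC
end

section
/- Let G|_R be connected with |R| ≥ 2 and m a partition scheme on G|_R. Then Σ_{g connected spanning subgraph of G|_R} Π_{e ∈ E_g} w_e = Σ_{τ spanning tree} Σ_{S : τ ⊆ S ⊆ m(τ)} Π_{e ∈ E_S} w_e, i.e., the generating polynomial over connected spanning subgraphs factors through the interval decomposition of the partition scheme. -/
open scoped Classical

namespace BC

variable {V : Type*}

/-- The generating polynomial over connected spanning subgraphs factors through the
interval decomposition given by a partition scheme. -/
theorem css_sum_eq_interval_sum [Fintype V] [DecidableEq V] (G : SimpleGraph V)
    [DecidableRel G.Adj] (R : Finset V) (hR2 : 2 ≤ R.card) (hRconn : ConnOn R (edgesIn G R))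
    (m : Finset (Sym2 V) → Finset (Sym2 V))
    (hm1 : ∀ τ, IsSpanningTree G R τ → τ ⊆ m τ ∧ IsCSS G R (m τ))
    (hm2 : ∀ g, IsCSS G R g → ∃! τ, IsSpanningTree G R τ ∧ τ ⊆ g ∧ g ⊆ m τ)
    (w : Sym2 V → ℝ) :
    ∑ g ∈ (edgesIn G R).powerset.filter (IsCSS G R), ∏ e ∈ g, w e =
      ∑ τ ∈ (edgesIn G R).powerset.filter (IsSpanningTree G R),
        ∑ S ∈ Finset.Icc τ (m τ), ∏ e ∈ S, w e := by
  have hInt : ∀ τ ∈ (edgesIn G R).powerset.filter (IsSpanningTree G R),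
      ∀ S ∈ Finset.Icc τ (m τ), IsCSS G R S := by
    intro τ hτ S hS
    rw [Finset.mem_filter] at hτ
    rw [Finset.mem_Icc] at hS
    exact ⟨hS.2.trans (hm1 τ hτ.2).2.1, connOn_mono hS.1 hτ.2.1.2⟩
  rw [Finset.sum_comm' (t' := (edgesIn G R).powerset.filter (IsCSS G R))
      (s' := fun S => (edgesIn G R).powerset.filter
        (fun τ => IsSpanningTree G R τ ∧ τ ⊆ S ∧ S ⊆ m τ)) ?_]
  · refine (Finset.sum_congr rfl ?_).symm
    intro g hg
    rw [Finset.mem_filter] at hg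
    obtain ⟨τ₀, hτ₀, huniq⟩ := hm2 g hg.2
    have hset : (edgesIn G R).powerset.filter
        (fun τ => IsSpanningTree G R τ ∧ τ ⊆ g ∧ g ⊆ m τ) = {τ₀} := by
      ext τ
      simp only [Finset.mem_filter, Finset.mem_singleton, Finset.mem_powerset]
      constructor
      · rintro ⟨-, h⟩; exact huniq τ h
      · rintro rfl; exact ⟨hτ₀.1.1.1, hτ₀⟩
    rw [hset, Finset.sum_singleton]
  · intro τ S
    simp only [Finset.mem_filter, Finset.mem_Icc, Finset.mem_powerset]
    constructor
    · rintro ⟨⟨hτe, hτst⟩, h1, h2⟩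
      have hcss : IsCSS G R S := hInt τ (by simp [Finset.mem_filter, hτe, hτst]) S
        (Finset.mem_Icc.mpr ⟨h1, h2⟩)
      exact ⟨⟨hτe, hτst, h1, h2⟩, hcss.1, hcss⟩
    · rintro ⟨⟨hτe, hτst, h1, h2⟩, -⟩
      exact ⟨⟨hτe, hτst⟩, h1, h2⟩

end BC
end
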